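/- For the folding pair (E_6, F_4) with σ-stable Cartan 𝔱, 𝔱_𝔨 = 𝔱^σ, restriction map ρ: 𝔱* → 𝔱_𝔨*, fundamental weights ϖ_1,…,ϖ_6 of E_6 (Bourbaki numbering) and ν_1,…,ν_4 of F_4: the weight 2ν_1 is not a 𝔱_𝔨-weight of the restriction to 𝔨 of the irreducible E_6-module V(ϖ_4). Equivalently, there is no weight μ of V(ϖ_4) of the form μ = aϖ_1 + 2ϖ_2 + bϖ_3 − bϖ_5 − aϖ_6 with a, b ∈ ℤ. -/

import Mathlib

/-!
Compare `α₂`-coefficients. Lowering `ϖ₄` by simple roots can only decrease its `α₂`-coefficient,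
which is `3`. Since `σ` fixes `α₂`, the weights `ϖ₁, ϖ₆` and `ϖ₃, ϖ₅` have equal `α₂`-coefficients,
so `a(ϖ₁ - ϖ₆) + b(ϖ₃ - ϖ₅)` has none and `aϖ₁ + 2ϖ₂ + bϖ₃ - bϖ₅ - aϖ₆` has `α₂`-coefficient `4`.
-/

lemma sub_sum_natCast_smul_single_apply_le {ι R : Type*} [Fintype ι] [DecidableEq ι]
    [Ring R] [PartialOrder R] [IsOrderedRing R] (v : ι → R) (d : ι → ℕ) (j : ι) :
    (v - ∑ i, (d i : R) • Pi.single i (1 : R)) j ≤ v j := by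
  simp [Finset.sum_apply, Pi.single_apply]

lemma antisymm_combination_apply {ι R : Type*} [CommRing R] (ϖ : Fin 6 → ι → R) (j : ι)
    (h05 : ϖ 0 j = ϖ 5 j) (h24 : ϖ 2 j = ϖ 4 j) (a b c : R) :
    (a • ϖ 0 + c • ϖ 1 + b • ϖ 2 - b • ϖ 4 - a • ϖ 5) j = c * ϖ 1 j := by
  simp only [Pi.sub_apply, Pi.add_apply, Pi.smul_apply, smul_eq_mul, h05, h24]
  ring

/-- **`2ν₁` is not a weight of the restriction to `F₄` of the `E₆`-module `V(ϖ₄)`**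
(Bushek–Kumar, proof of Theorem 3.1, Case V).  We work in the root lattice of `E₆` (Bourbaki
numbering, `0`-based), realized inside `ℚ⁶` with the simple roots `α i` the standard basis
vectors and the fundamental weights `ϖ i` given by their expressions in the simple roots
(Bourbaki, Planche V).  Every weight `μ` of the 2925-dimensional module `V(ϖ₄)` has the form
`μ = ϖ₄ - Σᵢ dᵢ αᵢ` with `dᵢ ∈ ℕ`; and no such vector — in particular no weight of
`V(ϖ₄)` — has the form `a ϖ₁ + 2 ϖ₂ + b ϖ₃ - b ϖ₅ - a ϖ₆` with `a, b ∈ ℤ`, which is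
precisely the condition for its restriction to `t_k = t^σ` to equal `2ν₁`. -/
theorem weight_2nu1_not_in_E6_module_Vpi4 :
    ∀ α ϖ : Fin 6 → Fin 6 → ℚ,
      (∀ i, α i = Pi.single i 1) →
      ϖ 0 = (4/3 : ℚ) • α 0 + 1 • α 1 + (5/3 : ℚ) • α 2 + 2 • α 3 +
        (4/3 : ℚ) • α 4 + (2/3 : ℚ) • α 5 →
      ϖ 1 = 1 • α 0 + 2 • α 1 + 2 • α 2 + 3 • α 3 + 2 • α 4 + 1 • α 5 →
      ϖ 2 = (5/3 : ℚ) • α 0 + 2 • α 1 + (10/3 : ℚ) • α 2 + 4 • α 3 +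
        (8/3 : ℚ) • α 4 + (4/3 : ℚ) • α 5 →
      ϖ 3 = 2 • α 0 + 3 • α 1 + 4 • α 2 + 6 • α 3 + 4 • α 4 + 2 • α 5 →
      ϖ 4 = (4/3 : ℚ) • α 0 + 2 • α 1 + (8/3 : ℚ) • α 2 + 4 • α 3 +
        (10/3 : ℚ) • α 4 + (5/3 : ℚ) • α 5 →
      ϖ 5 = (2/3 : ℚ) • α 0 + 1 • α 1 + (4/3 : ℚ) • α 2 + 2 • α 3 +
        (5/3 : ℚ) • α 4 + (4/3 : ℚ) • α 5 →
      ∀ μ : Fin 6 → ℚ,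
        (∃ d : Fin 6 → ℕ, μ = ϖ 3 - ∑ i, (d i : ℚ) • α i) →
        ¬ ∃ a b : ℤ, μ = (a : ℚ) • ϖ 0 + (2 : ℚ) • ϖ 1 + (b : ℚ) • ϖ 2
          - (b : ℚ) • ϖ 4 - (a : ℚ) • ϖ 5 := by
  rintro α ϖ hα h0 h1 h2 h3 h4 h5 μ ⟨d, rfl⟩ ⟨a, b, hab⟩
  have h05 : ϖ 0 1 = ϖ 5 1 := by simp [h0, h5, hα]
  have h24 : ϖ 2 1 = ϖ 4 1 := by simp [h2, h4, hα]
  have h11 : ϖ 1 1 = 2 := by simp [h1, hα]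
  have h31 : ϖ 3 1 = 3 := by simp [h3, hα]
  have lower := sub_sum_natCast_smul_single_apply_le (ϖ 3) d 1
  simp only [← hα] at lower
  rw [hab, antisymm_combination_apply ϖ 1 h05 h24, h11, h31] at lower
  norm_num at lower
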